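/- arXiv:1602.03601 — 3 statements merged into one kernel-verified Lean document; each statement's English description precedes it below -/
import Mathlib

section
/- Suppose the metric coefficients and curvatures of a surface with coordinates (θ,z) along lines of curvature satisfy κ_z = 0 and have the form A_z = B'(z), A_θ = a(θ)B(z) + b(θ), κ_θ = c(θ)/A_θ for smooth functions B, a, b, c. Then the Codazzi equations ∂κ_z/∂θ = (κ_θ − κ_z)·A_{z,θ}/A_z and ∂κ_θ/∂z = (κ_z − κ_θ)·A_{θ,z}/A_θ and the Gauss equation ∂/∂z(A_{θ,z}/A_z) + ∂/∂θ(A_{z,θ}/A_θ) = −A_z A_θ κ_z κ_θ all hold. -/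
/-- The explicit formulas `A_z = B'`, `A_θ = aB + b`, `κ_θ = c/A_θ`, `κ_z = 0`
solve the Codazzi–Gauss system in the zero-Gaussian-curvature case. -/
theorem codazzi_gauss_zero_gaussian (B a b c : ℝ → ℝ)
    (hB : ContDiff ℝ (⊤ : ℕ∞) B) (ha : ContDiff ℝ (⊤ : ℕ∞) a) (hb : ContDiff ℝ (⊤ : ℕ∞) b)
    (hc : ContDiff ℝ (⊤ : ℕ∞) c)
    (hAz : ∀ z : ℝ, 0 < deriv B z)
    (hAθ : ∀ θ z : ℝ, 0 < a θ * B z + b θ) :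
    -- first Codazzi equation: ∂κ_z/∂θ = (κ_θ − κ_z) A_{z,θ}/A_z
    (∀ θ z : ℝ, deriv (fun _ : ℝ => (0 : ℝ)) θ
        = (c θ / (a θ * B z + b θ) - 0)
          * deriv (fun _ : ℝ => deriv B z) θ / deriv B z) ∧
    -- second Codazzi equation: ∂κ_θ/∂z = (κ_z − κ_θ) A_{θ,z}/A_θ
    (∀ θ z : ℝ, deriv (fun z' => c θ / (a θ * B z' + b θ)) z
        = (0 - c θ / (a θ * B z + b θ))
          * deriv (fun z' => a θ * B z' + b θ) z / (a θ * B z + b θ)) ∧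
    -- Gauss equation: ∂_z(A_{θ,z}/A_z) + ∂_θ(A_{z,θ}/A_θ) = −A_z A_θ κ_z κ_θ
    (∀ θ z : ℝ,
      deriv (fun z' => (deriv (fun z'' => a θ * B z'' + b θ) z') / deriv B z') z
        + deriv (fun θ' =>
            (deriv (fun _ : ℝ => deriv B z) θ') / (a θ' * B z + b θ')) θ
      = -(deriv B z * (a θ * B z + b θ) * 0 * (c θ / (a θ * B z + b θ)))) := by
  have hBd : Differentiable ℝ B := hB.differentiable (by simp)
  have hden : ∀ θ z : ℝ, a θ * B z + b θ ≠ 0 := fun θ z => (hAθ θ z).ne'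
  have hg : ∀ θ z : ℝ, deriv (fun z' => a θ * B z' + b θ) z = a θ * deriv B z := by
    intro θ z
    rw [deriv_add_const, deriv_const_mul _ (hBd z)]
  have hgd : ∀ θ z : ℝ, DifferentiableAt ℝ (fun z' => a θ * B z' + b θ) z :=
    fun θ z => ((hBd z).const_mul (a θ)).add_const (b θ)
  refine ⟨fun θ z => by simp, fun θ z => ?_, fun θ z => ?_⟩
  · rw [deriv_fun_div (differentiableAt_const _) (hgd θ z) (hden θ z), hg]
    field_simp [hden θ z]
    rw [deriv_const]; ring
  · have h1 : (fun z' => (deriv (fun z'' => a θ * B z'' + b θ) z') / deriv B z')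
        = fun _ => a θ := by
      funext z'
      rw [hg]
      field_simp [(hAz z').ne']
    rw [h1]
    simp
end

section
/- (Sharpness of the h² Korn constant for plates) For every h ∈ (0,1) there exists a nonzero vector field u^h ∈ H¹(P_h; ℝ³) on the plate P_h = Ω × (−h/2,h/2), with u^h vanishing near ∂Ω × (−h/2,h/2), such that ‖e(u^h)‖² ≤ C h² ‖∇u^h‖² for a constant C independent of h. -/
/-!
Take a bump `φ` supported in `Ω` and the Kirchhoff–Love field `u = (-x₃ ∂₁φ, -x₃ ∂₂φ, φ)`.
Its transverse shear strains `e₁₃, e₂₃` cancel exactly, so `e(u) = -x₃ sym ∇²φ` and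
`‖e(u)‖² = (h³/12) ‖sym ∇²φ‖²`, whereas the gradient keeps the terms `∓∂ₐφ`, so
`‖∇u‖² ≥ 2h ‖∇φ‖²`. Since `φ` has compact support and is not zero, `∇φ ≢ 0`, and the ratio
of the two is `O(h²)`.
-/

open MeasureTheory Set
open scoped ContDiff

section Calculus

variable {𝕜 : Type*} [NontriviallyNormedField 𝕜] {E F G : Type*}
  [NormedAddCommGroup E] [NormedSpace 𝕜 E] [NormedAddCommGroup F] [NormedSpace 𝕜 F]
  [NormedAddCommGroup G] [NormedSpace 𝕜 G]

theorem fderiv_comp_fst_apply {f : E → F} {x : E × G} (hf : DifferentiableAt 𝕜 f x.1)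
    (v : E × G) : fderiv 𝕜 (fun x : E × G => f x.1) x v = fderiv 𝕜 f x.1 v.1 :=
  DFunLike.congr_fun (hf.hasFDerivAt.comp x hasFDerivAt_fst).fderiv v

theorem fderiv_snd_mul_comp_fst_apply {ψ : E → 𝕜} {x : E × 𝕜} (hψ : DifferentiableAt 𝕜 ψ x.1)
    (v : E × 𝕜) :
    fderiv 𝕜 (fun x : E × 𝕜 => x.2 * ψ x.1) x v = x.2 * fderiv 𝕜 ψ x.1 v.1 + ψ x.1 * v.2 := by
  have hderiv : HasFDerivAt (fun x : E × 𝕜 => x.2 * ψ x.1) _ x :=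
    hasFDerivAt_snd.mul (hψ.hasFDerivAt.comp x hasFDerivAt_fst)
  rw [hderiv.fderiv]
  simp

end Calculus

theorem integral_Ioo_sq {h : ℝ} (hh : 0 ≤ h) :
    ∫ y in Ioo (-(h / 2)) (h / 2), y ^ 2 = h ^ 3 / 12 := by
  rw [← integral_Ioc_eq_integral_Ioo, ← intervalIntegral.integral_of_le (by linarith),
    integral_pow]
  ring

section RealCalculus

variable {E F : Type*} [NormedAddCommGroup E] [NormedSpace ℝ E] [NormedAddCommGroup F]
  [NormedSpace ℝ F]

theorem HasCompactSupport.exists_fderiv_ne_zero [Nontrivial E] {f : E → F}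
    (hf : Differentiable ℝ f) (hcs : HasCompactSupport f) (hne : f ≠ 0) :
    ∃ p, fderiv ℝ f p ≠ 0 := by
  by_contra! hconst
  obtain ⟨q, hq⟩ : ∃ q, q ∉ tsupport f := by
    simpa [eq_univ_iff_forall] using hcs.isCompact.ne_univ
  exact hne (funext fun p => (is_const_of_fderiv_eq_zero hf hconst p q).trans
    (image_eq_zero_of_notMem_tsupport hq))

noncomputable def dirDeriv (v : E) (f : E → F) (p : E) : F := fderiv ℝ f p v

@[simp]
theorem dirDeriv_zero (f : E → F) : dirDeriv 0 f = 0 := by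
  ext p
  simp [dirDeriv]

theorem ContDiff.dirDeriv {m n : WithTop ℕ∞} {f : E → F} (hf : ContDiff ℝ n f) (hmn : m + 1 ≤ n)
    (v : E) : ContDiff ℝ m (dirDeriv v f) :=
  (hf.fderiv_right hmn).clm_apply contDiff_const

theorem tsupport_dirDeriv_subset (v : E) (f : E → F) : tsupport (dirDeriv v f) ⊆ tsupport f :=
  tsupport_fderiv_apply_subset ℝ v

theorem dirDeriv_of_notMem_tsupport {f : E → F} {p : E} (hp : p ∉ tsupport f) (v : E) :
    dirDeriv v f p = 0 := by
  simp [dirDeriv, fderiv_of_notMem_tsupport ℝ hp]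

end RealCalculus

noncomputable section Plate

def symGradSq (u₁ u₂ u₃ : (ℝ × ℝ) × ℝ → ℝ) (x : (ℝ × ℝ) × ℝ) : ℝ :=
  (fderiv ℝ u₁ x ((1,0),0))^2
  + 2 * ((fderiv ℝ u₁ x ((0,1),0) + fderiv ℝ u₂ x ((1,0),0)) / 2)^2
  + 2 * ((fderiv ℝ u₁ x ((0,0),1) + fderiv ℝ u₃ x ((1,0),0)) / 2)^2
  + (fderiv ℝ u₂ x ((0,1),0))^2
  + 2 * ((fderiv ℝ u₂ x ((0,0),1) + fderiv ℝ u₃ x ((0,1),0)) / 2)^2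
  + (fderiv ℝ u₃ x ((0,0),1))^2

def gradSq (u₁ u₂ u₃ : (ℝ × ℝ) × ℝ → ℝ) (x : (ℝ × ℝ) × ℝ) : ℝ :=
  (fderiv ℝ u₁ x ((1,0),0))^2 + (fderiv ℝ u₁ x ((0,1),0))^2
  + (fderiv ℝ u₁ x ((0,0),1))^2
  + (fderiv ℝ u₂ x ((1,0),0))^2 + (fderiv ℝ u₂ x ((0,1),0))^2
  + (fderiv ℝ u₂ x ((0,0),1))^2
  + (fderiv ℝ u₃ x ((1,0),0))^2 + (fderiv ℝ u₃ x ((0,1),0))^2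
  + (fderiv ℝ u₃ x ((0,0),1))^2

variable (φ : ℝ × ℝ → ℝ)

def kirchhoffInPlane (v : ℝ × ℝ) (x : (ℝ × ℝ) × ℝ) : ℝ := -(x.2 * dirDeriv v φ x.1)

def gradientSq (p : ℝ × ℝ) : ℝ := dirDeriv (1, 0) φ p ^ 2 + dirDeriv (0, 1) φ p ^ 2

def hessianSq (p : ℝ × ℝ) : ℝ :=
  dirDeriv (1, 0) (dirDeriv (1, 0) φ) p ^ 2 + dirDeriv (0, 1) (dirDeriv (1, 0) φ) p ^ 2
  + dirDeriv (1, 0) (dirDeriv (0, 1) φ) p ^ 2 + dirDeriv (0, 1) (dirDeriv (0, 1) φ) p ^ 2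

def hessianSymSq (p : ℝ × ℝ) : ℝ :=
  dirDeriv (1, 0) (dirDeriv (1, 0) φ) p ^ 2
  + 2 * ((dirDeriv (0, 1) (dirDeriv (1, 0) φ) p + dirDeriv (1, 0) (dirDeriv (0, 1) φ) p) / 2) ^ 2
  + dirDeriv (0, 1) (dirDeriv (0, 1) φ) p ^ 2

variable {φ}

theorem contDiff_kirchhoffInPlane (hφ : ContDiff ℝ 2 φ) (v : ℝ × ℝ) :
    ContDiff ℝ 1 (kirchhoffInPlane φ v) :=
  (contDiff_snd.mul ((hφ.dirDeriv (by norm_num) v).comp contDiff_fst)).neg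

theorem fderiv_kirchhoffInPlane_apply (hφ : ContDiff ℝ 2 φ) (v : ℝ × ℝ) (x w : (ℝ × ℝ) × ℝ) :
    fderiv ℝ (kirchhoffInPlane φ v) x w
      = -(x.2 * dirDeriv w.1 (dirDeriv v φ) x.1 + dirDeriv v φ x.1 * w.2) := by
  have hdiff : Differentiable ℝ (dirDeriv v φ) :=
    (hφ.dirDeriv (m := 1) (by norm_num) v).differentiable one_ne_zero
  unfold kirchhoffInPlane
  rw [fderiv_fun_neg, neg_apply, fderiv_snd_mul_comp_fst_apply (hdiff _)]
  rfl

theorem fderiv_comp_fst_apply_eq_dirDeriv (hφ : Differentiable ℝ φ) (x w : (ℝ × ℝ) × ℝ) :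
    fderiv ℝ (fun x : (ℝ × ℝ) × ℝ => φ x.1) x w = dirDeriv w.1 φ x.1 :=
  fderiv_comp_fst_apply (hφ _) w

theorem symGradSq_kirchhoff (hφ : ContDiff ℝ 2 φ) (x : (ℝ × ℝ) × ℝ) :
    symGradSq (kirchhoffInPlane φ (1, 0)) (kirchhoffInPlane φ (0, 1)) (fun x => φ x.1) x
      = hessianSymSq φ x.1 * x.2 ^ 2 := by
  simp only [symGradSq, hessianSymSq, fderiv_kirchhoffInPlane_apply hφ,
    fderiv_comp_fst_apply_eq_dirDeriv (hφ.differentiable two_ne_zero), Prod.mk_zero_zero,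
    dirDeriv_zero, Pi.zero_apply]
  ring

theorem gradSq_kirchhoff (hφ : ContDiff ℝ 2 φ) (x : (ℝ × ℝ) × ℝ) :
    gradSq (kirchhoffInPlane φ (1, 0)) (kirchhoffInPlane φ (0, 1)) (fun x => φ x.1) x
      = hessianSq φ x.1 * x.2 ^ 2 + 2 * gradientSq φ x.1 := by
  simp only [gradSq, hessianSq, gradientSq, fderiv_kirchhoffInPlane_apply hφ,
    fderiv_comp_fst_apply_eq_dirDeriv (hφ.differentiable two_ne_zero), Prod.mk_zero_zero,
    dirDeriv_zero, Pi.zero_apply]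
  ring

theorem kirchhoffInPlane_of_notMem_tsupport {x : (ℝ × ℝ) × ℝ} (hx : x.1 ∉ tsupport φ)
    (v : ℝ × ℝ) : kirchhoffInPlane φ v x = 0 := by
  simp [kirchhoffInPlane, dirDeriv_of_notMem_tsupport hx]

theorem continuous_gradientSq (hφ : ContDiff ℝ 1 φ) : Continuous (gradientSq φ) := by
  unfold gradientSq
  have := fun v => (hφ.dirDeriv (m := 0) (by norm_num) v).continuous
  fun_prop

theorem continuous_hessianSq (hφ : ContDiff ℝ 2 φ) : Continuous (hessianSq φ) := by
  unfold hessianSq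
  have := fun v w =>
    ((hφ.dirDeriv (m := 1) (by norm_num) v).dirDeriv (m := 0) (by norm_num) w).continuous
  fun_prop

theorem gradientSq_of_notMem_tsupport {p : ℝ × ℝ} (hp : p ∉ tsupport φ) :
    gradientSq φ p = 0 := by
  simp [gradientSq, dirDeriv_of_notMem_tsupport hp]

theorem hessianSq_of_notMem_tsupport {p : ℝ × ℝ} (hp : p ∉ tsupport φ) :
    hessianSq φ p = 0 := by
  have := fun v => dirDeriv_of_notMem_tsupport (fun h => hp (tsupport_dirDeriv_subset v φ h))
  simp [hessianSq, this]

theorem HasCompactSupport.gradientSq (hcs : HasCompactSupport φ) :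
    HasCompactSupport (gradientSq φ) :=
  hcs.mono' (Function.support_subset_iff'.2 fun _ => gradientSq_of_notMem_tsupport)

theorem HasCompactSupport.hessianSq (hcs : HasCompactSupport φ) :
    HasCompactSupport (hessianSq φ) :=
  hcs.mono' (Function.support_subset_iff'.2 fun _ => hessianSq_of_notMem_tsupport)

theorem fderiv_eq_zero_of_gradientSq_eq_zero {p : ℝ × ℝ} (hp : gradientSq φ p = 0) :
    fderiv ℝ φ p = 0 := by
  obtain ⟨h₁, h₂⟩ := (add_eq_zero_iff_of_nonneg (sq_nonneg _) (sq_nonneg _)).1 hp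
  refine ContinuousLinearMap.prod_ext (ContinuousLinearMap.ext_ring ?_)
    (ContinuousLinearMap.ext_ring ?_)
  · simpa [dirDeriv] using h₁
  · simpa [dirDeriv] using h₂

theorem integral_gradientSq_pos {Ω : Set (ℝ × ℝ)} (hφ : ContDiff ℝ 1 φ)
    (hcs : HasCompactSupport φ) (hΩ : tsupport φ ⊆ Ω) (hne : φ ≠ 0) :
    0 < ∫ p in Ω, gradientSq φ p := by
  obtain ⟨p, hp⟩ := hcs.exists_fderiv_ne_zero (hφ.differentiable one_ne_zero) hne
  rw [setIntegral_eq_integral_of_forall_compl_eq_zero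
    fun q hq => gradientSq_of_notMem_tsupport fun h => hq (hΩ h)]
  exact (continuous_gradientSq hφ).integral_pos_of_hasCompactSupport_nonneg_nonzero
    hcs.gradientSq (fun q => by unfold gradientSq; positivity)
    (mt fderiv_eq_zero_of_gradientSq_eq_zero hp)

variable {Ω : Set (ℝ × ℝ)} {h : ℝ}

theorem integral_symGradSq_kirchhoff (hφ : ContDiff ℝ 2 φ) (hh : 0 ≤ h) :
    ∫ x in Ω ×ˢ Ioo (-(h / 2)) (h / 2),
        symGradSq (kirchhoffInPlane φ (1, 0)) (kirchhoffInPlane φ (0, 1)) (fun x => φ x.1) x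
      = (∫ p in Ω, hessianSymSq φ p) * (h ^ 3 / 12) := by
  simp_rw [symGradSq_kirchhoff hφ]
  rw [Measure.volume_eq_prod, setIntegral_prod_mul (hessianSymSq φ) (· ^ 2), integral_Ioo_sq hh]

theorem integral_gradSq_kirchhoff (hφ : ContDiff ℝ 2 φ) (hcs : HasCompactSupport φ)
    (hh : 0 ≤ h) :
    ∫ x in Ω ×ˢ Ioo (-(h / 2)) (h / 2),
        gradSq (kirchhoffInPlane φ (1, 0)) (kirchhoffInPlane φ (0, 1)) (fun x => φ x.1) x
      = (∫ p in Ω, hessianSq φ p) * (h ^ 3 / 12) + 2 * ((∫ p in Ω, gradientSq φ p) * h) := by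
  have hbending : Integrable (fun x : (ℝ × ℝ) × ℝ => hessianSq φ x.1 * x.2 ^ 2)
      ((volume.restrict Ω).prod (volume.restrict (Ioo (-(h / 2)) (h / 2)))) :=
    ((continuous_hessianSq hφ).integrable_of_hasCompactSupport
      hcs.hessianSq).integrableOn.mul_prod
        ((continuous_pow 2).integrableOn_Icc.mono_set Ioo_subset_Icc_self)
  have hshear : Integrable (fun x : (ℝ × ℝ) × ℝ => 2 * gradientSq φ x.1)
      ((volume.restrict Ω).prod (volume.restrict (Ioo (-(h / 2)) (h / 2)))) :=
    (((continuous_gradientSq (hφ.of_le one_le_two)).integrable_of_hasCompactSupport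
      hcs.gradientSq).integrableOn.comp_fst _).const_mul 2
  simp_rw [gradSq_kirchhoff hφ]
  rw [Measure.volume_eq_prod, ← Measure.prod_restrict, integral_add hbending hshear,
    integral_prod_mul (hessianSq φ) (· ^ 2), integral_Ioo_sq hh, integral_const_mul,
    integral_fun_fst, measureReal_restrict_apply_univ, Real.volume_real_Ioo_of_le (by linarith),
    smul_eq_mul]
  ring

end Plate

theorem plate_korn_sharpness_general (Ω : Set (ℝ × ℝ)) (hΩopen : IsOpen Ω)
    (hΩne : Ω.Nonempty) :
    ∃ C : ℝ, 0 < C ∧ ∀ h : ℝ, 0 < h → h < 1 →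
      ∃ u₁ u₂ u₃ : (ℝ × ℝ) × ℝ → ℝ,
        ContDiff ℝ 1 u₁ ∧ ContDiff ℝ 1 u₂ ∧ ContDiff ℝ 1 u₃ ∧
        (∃ K : Set (ℝ × ℝ), IsCompact K ∧ K ⊆ Ω ∧
          ∀ x : (ℝ × ℝ) × ℝ, x.1 ∉ K → u₁ x = 0 ∧ u₂ x = 0 ∧ u₃ x = 0) ∧
        (∃ x ∈ Ω ×ˢ Set.Ioo (-(h/2)) (h/2),
          ¬ (u₁ x = 0 ∧ u₂ x = 0 ∧ u₃ x = 0)) ∧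
        (∫ x in Ω ×ˢ Set.Ioo (-(h/2)) (h/2),
            (fderiv ℝ u₁ x ((1,0),0))^2
            + 2 * ((fderiv ℝ u₁ x ((0,1),0) + fderiv ℝ u₂ x ((1,0),0)) / 2)^2
            + 2 * ((fderiv ℝ u₁ x ((0,0),1) + fderiv ℝ u₃ x ((1,0),0)) / 2)^2
            + (fderiv ℝ u₂ x ((0,1),0))^2
            + 2 * ((fderiv ℝ u₂ x ((0,0),1) + fderiv ℝ u₃ x ((0,1),0)) / 2)^2
            + (fderiv ℝ u₃ x ((0,0),1))^2)
          ≤ C * h^2 * (∫ x in Ω ×ˢ Set.Ioo (-(h/2)) (h/2),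
              (fderiv ℝ u₁ x ((1,0),0))^2 + (fderiv ℝ u₁ x ((0,1),0))^2
              + (fderiv ℝ u₁ x ((0,0),1))^2
              + (fderiv ℝ u₂ x ((1,0),0))^2 + (fderiv ℝ u₂ x ((0,1),0))^2
              + (fderiv ℝ u₂ x ((0,0),1))^2
              + (fderiv ℝ u₃ x ((1,0),0))^2 + (fderiv ℝ u₃ x ((0,1),0))^2
              + (fderiv ℝ u₃ x ((0,0),1))^2) := by
  obtain ⟨c, hc⟩ := hΩne
  obtain ⟨φ, hφΩ, hcs, hφ, -, hφc⟩ :=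
    exists_contDiff_tsupport_subset (n := 2) (hΩopen.mem_nhds hc)
  have hφ_ne : φ ≠ 0 := fun h0 => by simp [h0] at hφc
  have hG := integral_gradientSq_pos (hφ.of_le one_le_two) hcs hφΩ hφ_ne
  set A := ∫ p in Ω, hessianSymSq φ p
  set B := ∫ p in Ω, hessianSq φ p
  set G := ∫ p in Ω, gradientSq φ p
  have hA : 0 ≤ A := integral_nonneg fun p => by unfold hessianSymSq; positivity
  have hB : 0 ≤ B := integral_nonneg fun p => by unfold hessianSq; positivity
  refine ⟨A / (24 * G) + 1, by positivity, fun h hh _ => ⟨kirchhoffInPlane φ (1, 0),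
    kirchhoffInPlane φ (0, 1), fun x => φ x.1, contDiff_kirchhoffInPlane hφ _,
    contDiff_kirchhoffInPlane hφ _, (hφ.of_le one_le_two).comp contDiff_fst,
    ⟨tsupport φ, hcs, hφΩ, fun x hx => ⟨kirchhoffInPlane_of_notMem_tsupport hx _,
      kirchhoffInPlane_of_notMem_tsupport hx _, image_eq_zero_of_notMem_tsupport hx⟩⟩,
    ⟨(c, 0), ⟨hc, by constructor <;> linarith⟩, fun h0 => by simp [hφc] at h0⟩, ?_⟩⟩
  show ∫ x in _, symGradSq _ _ _ x ≤ _ * ∫ x in _, gradSq _ _ _ x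
  rw [integral_symGradSq_kirchhoff hφ hh.le, integral_gradSq_kirchhoff hφ hcs hh.le]
  calc A * (h ^ 3 / 12) = A / (24 * G) * h ^ 2 * (2 * (G * h)) := by field_simp; ring
    _ ≤ (A / (24 * G) + 1) * h ^ 2 * (B * (h ^ 3 / 12) + 2 * (G * h)) := by
      gcongr
      exacts [le_add_of_nonneg_right zero_le_one, le_add_of_nonneg_left (by positivity)]

/-- Sharpness of the `h²` Korn constant for plates: for every `h ∈ (0,1)`
there is a nonzero field `u^h` on `P_h = Ω × (−h/2,h/2)`, vanishing near
`∂Ω × (−h/2,h/2)`, with `‖e(u^h)‖² ≤ C h² ‖∇u^h‖²`, `C` independent of `h`. -/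
theorem plate_korn_sharpness (Ω : Set (ℝ × ℝ)) (hΩopen : IsOpen Ω)
    (hΩne : Ω.Nonempty) (hΩbdd : Bornology.IsBounded Ω) :
    ∃ C : ℝ, 0 < C ∧ ∀ h : ℝ, 0 < h → h < 1 →
      ∃ u₁ u₂ u₃ : (ℝ × ℝ) × ℝ → ℝ,
        ContDiff ℝ 1 u₁ ∧ ContDiff ℝ 1 u₂ ∧ ContDiff ℝ 1 u₃ ∧
        (∃ K : Set (ℝ × ℝ), IsCompact K ∧ K ⊆ Ω ∧
          ∀ x : (ℝ × ℝ) × ℝ, x.1 ∉ K → u₁ x = 0 ∧ u₂ x = 0 ∧ u₃ x = 0) ∧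
        (∃ x ∈ Ω ×ˢ Set.Ioo (-(h/2)) (h/2),
          ¬ (u₁ x = 0 ∧ u₂ x = 0 ∧ u₃ x = 0)) ∧
        (∫ x in Ω ×ˢ Set.Ioo (-(h/2)) (h/2),
            (fderiv ℝ u₁ x ((1,0),0))^2
            + 2 * ((fderiv ℝ u₁ x ((0,1),0) + fderiv ℝ u₂ x ((1,0),0)) / 2)^2
            + 2 * ((fderiv ℝ u₁ x ((0,0),1) + fderiv ℝ u₃ x ((1,0),0)) / 2)^2
            + (fderiv ℝ u₂ x ((0,1),0))^2
            + 2 * ((fderiv ℝ u₂ x ((0,0),1) + fderiv ℝ u₃ x ((0,1),0)) / 2)^2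
            + (fderiv ℝ u₃ x ((0,0),1))^2)
          ≤ C * h^2 * (∫ x in Ω ×ˢ Set.Ioo (-(h/2)) (h/2),
              (fderiv ℝ u₁ x ((1,0),0))^2 + (fderiv ℝ u₁ x ((0,1),0))^2
              + (fderiv ℝ u₁ x ((0,0),1))^2
              + (fderiv ℝ u₂ x ((1,0),0))^2 + (fderiv ℝ u₂ x ((0,1),0))^2
              + (fderiv ℝ u₂ x ((0,0),1))^2
              + (fderiv ℝ u₃ x ((1,0),0))^2 + (fderiv ℝ u₃ x ((0,1),0))^2
              + (fderiv ℝ u₃ x ((0,0),1))^2) :=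
  plate_korn_sharpness_general Ω hΩopen hΩne
end

section
/- (Separation-of-variables characterization) Let B : [l,L] → ℝ be C¹ with B' > 0 and let a, b : [0,p] → ℝ be Lipschitz with a(θ)B(z) + b(θ) > 0 on [0,p]×[l,L]. Define A_z(z) = B'(z) and A_θ(θ,z) = a(θ)B(z) + b(θ). If there exist functions H(θ) > 0 and G(z) > 0 with A_z/A_θ = H(θ)/G(z) on [0,p]×[l,L], and B is non-constant, then a and b are linearly dependent: there exists λ₀ ∈ ℝ with a = λ₀ b or b = λ₀ a. -/
/-!
Cross-multiplying, `H θ * (a θ * B z + b θ) = B' z * G z`, whose right side does not depend on `θ`.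
Evaluating at two points where `B` differs shows that `θ ↦ H θ * a θ` and `θ ↦ H θ * b θ` are
constant, so `(a θ, b θ)` is a nonzero multiple `1 / H θ` of one fixed vector.
-/

lemma Set.exists_apply_ne_apply_of_not_exists_eq_const {α β : Type*} [Nonempty β] {s : Set α}
    {f : α → β}
    (h : ¬ ∃ c, ∀ x ∈ s, f x = c) : ∃ x ∈ s, ∃ y ∈ s, f x ≠ f y := by
  by_contra! hconst
  rcases s.eq_empty_or_nonempty with rfl | ⟨x₀, hx₀⟩
  · exact h ⟨Classical.arbitrary β, by simp⟩
  · exact h ⟨f x₀, fun x hx => hconst x hx x₀ hx₀⟩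

section Field

variable {𝕜 : Type*} [Field 𝕜]

lemma eq_and_eq_of_affine_eq_affine {x y c₁ c₂ d₁ d₂ : 𝕜} (hxy : x ≠ y)
    (hx : c₁ * x + d₁ = c₂ * x + d₂) (hy : c₁ * y + d₁ = c₂ * y + d₂) :
    c₁ = c₂ ∧ d₁ = d₂ := by
  have hprod : (c₁ - c₂) * (x - y) = 0 := by linear_combination hx - hy
  have hc : c₁ = c₂ :=
    sub_eq_zero.mp ((mul_eq_zero.mp hprod).resolve_right (sub_ne_zero.mpr hxy))
  subst hc
  exact ⟨rfl, add_left_cancel hx⟩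

lemma cross_mul_eq_of_mul_eq_mul {h₁ h₂ a₁ a₂ b₁ b₂ : 𝕜} (hh₁ : h₁ ≠ 0) (hh₂ : h₂ ≠ 0)
    (ha : h₁ * a₁ = h₂ * a₂) (hb : h₁ * b₁ = h₂ * b₂) : a₁ * b₂ = a₂ * b₁ := by
  refine mul_left_cancel₀ (mul_ne_zero hh₁ hh₂) ?_
  linear_combination (h₂ * b₂) * ha - (h₂ * a₂) * hb

lemma exists_eq_mul_or_eq_mul_of_cross_eq {ι : Type*} {s : Set ι} {a b : ι → 𝕜}
    (h : ∀ i ∈ s, ∀ j ∈ s, a i * b j = a j * b i) :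
    ∃ lam : 𝕜, (∀ i ∈ s, a i = lam * b i) ∨ (∀ i ∈ s, b i = lam * a i) := by
  by_cases hb : ∀ i ∈ s, b i = 0
  · exact ⟨0, Or.inr fun i hi => by simp [hb i hi]⟩
  push Not at hb
  obtain ⟨j, hj, hbj⟩ := hb
  refine ⟨a j / b j, Or.inl fun i hi => ?_⟩
  rw [div_mul_eq_mul_div, eq_div_iff hbj, h i hi j hj]

end Field

theorem separation_of_variables_linear_dependence_general (p l L : ℝ) (B : ℝ → ℝ)
    (a b : ℝ → ℝ)
    (hAθ : ∀ θ ∈ Set.Icc 0 p, ∀ z ∈ Set.Icc l L, 0 < a θ * B z + b θ)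
    (H G : ℝ → ℝ)
    (hH : ∀ θ ∈ Set.Icc 0 p, 0 < H θ)
    (hG : ∀ z ∈ Set.Icc l L, 0 < G z)
    (hsep : ∀ θ ∈ Set.Icc 0 p, ∀ z ∈ Set.Icc l L,
      deriv B z / (a θ * B z + b θ) = H θ / G z)
    (hBnc : ¬ ∃ c₀ : ℝ, ∀ z ∈ Set.Icc l L, B z = c₀) :
    ∃ lam : ℝ, (∀ θ ∈ Set.Icc 0 p, a θ = lam * b θ) ∨
      (∀ θ ∈ Set.Icc 0 p, b θ = lam * a θ) := by
  have cross : ∀ θ ∈ Set.Icc 0 p, ∀ z ∈ Set.Icc l L,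
      H θ * (a θ * B z + b θ) = deriv B z * G z := fun θ hθ z hz => by
    have h := hsep θ hθ z hz
    rwa [div_eq_div_iff (hAθ θ hθ z hz).ne' (hG z hz).ne', eq_comm] at h
  obtain ⟨z₁, hz₁, z₂, hz₂, hne⟩ := Set.exists_apply_ne_apply_of_not_exists_eq_const hBnc
  refine exists_eq_mul_or_eq_mul_of_cross_eq fun θ hθ θ' hθ' => ?_
  obtain ⟨ha, hb⟩ := eq_and_eq_of_affine_eq_affine (c₁ := H θ * a θ) (c₂ := H θ' * a θ')
    (d₁ := H θ * b θ) (d₂ := H θ' * b θ') hne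
    (by linear_combination cross θ hθ z₁ hz₁ - cross θ' hθ' z₁ hz₁)
    (by linear_combination cross θ hθ z₂ hz₂ - cross θ' hθ' z₂ hz₂)
  exact cross_mul_eq_of_mul_eq_mul (hH θ hθ).ne' (hH θ' hθ').ne' ha hb

/-- Separation-of-variables characterization (Case 1): if
`A_z/A_θ = H(θ)/G(z)` with `A_z = B'`, `A_θ = aB + b` and `B` non-constant,
then `a` and `b` are linearly dependent. -/
theorem separation_of_variables_linear_dependence (p l L : ℝ) (hp : 0 < p)
    (hlL : l < L) (B : ℝ → ℝ) (hB : ContDiff ℝ 1 B)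
    (hB' : ∀ z ∈ Set.Icc l L, 0 < deriv B z)
    (a b : ℝ → ℝ) (K : NNReal)
    (ha : LipschitzOnWith K a (Set.Icc 0 p))
    (hb : LipschitzOnWith K b (Set.Icc 0 p))
    (hAθ : ∀ θ ∈ Set.Icc 0 p, ∀ z ∈ Set.Icc l L, 0 < a θ * B z + b θ)
    (H G : ℝ → ℝ)
    (hH : ∀ θ ∈ Set.Icc 0 p, 0 < H θ)
    (hG : ∀ z ∈ Set.Icc l L, 0 < G z)
    (hsep : ∀ θ ∈ Set.Icc 0 p, ∀ z ∈ Set.Icc l L,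
      deriv B z / (a θ * B z + b θ) = H θ / G z)
    (hBnc : ¬ ∃ c₀ : ℝ, ∀ z ∈ Set.Icc l L, B z = c₀) :
    ∃ lam : ℝ, (∀ θ ∈ Set.Icc 0 p, a θ = lam * b θ) ∨
      (∀ θ ∈ Set.Icc 0 p, b θ = lam * a θ) :=
  separation_of_variables_linear_dependence_general p l L B a b hAθ H G hH hG hsep hBnc
end
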